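/- Let θ ∈ (0, 0.22], let (x,y,z,λ,γ) ∈ N₂(θ) with duality gap μ > 0, let first- and second-derivative directions be given, and define q(s) = a₄s⁴ + a₃s³ + a₂s² + a₁s + a₀ with a₀ = −θμ, a₁ = θμ, a₂ = θ·ṗᵀω̇/n, a₃ = ‖ṗ∘ω̈ + ω̇∘p̈ − ((ṗᵀω̈ + ω̇ᵀp̈)/(2n))e‖, a₄ = ‖p̈∘ω̈ − ω̇∘ṗ − ((p̈ᵀω̈ − ω̇ᵀṗ)/(2n))e‖ + θ·ṗᵀω̇/n. Then q(θ/√n) ≤ 0; consequently the unique root sin(α̃) of q in (0,1] satisfies sin(α̃) ≥ θ/√n. -/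

import Mathlib

open scoped BigOperators

noncomputable section

/-- Euclidean dot product of two vectors. -/
def dotp {ι : Type*} [Fintype ι] (u v : ι → ℝ) : ℝ := ∑ i, u i * v i

/-- Euclidean norm of a vector. -/
def enorm2 {ι : Type*} [Fintype ι] (u : ι → ℝ) : ℝ := Real.sqrt (∑ i, (u i) ^ 2)

/-- Strict feasibility for the box-constrained QP KKT system. -/
def StrictlyFeasible {n : ℕ} (H : Matrix (Fin n) (Fin n) ℝ)
    (c x y z lam gam : Fin n → ℝ) : Prop :=
  H.mulVec x + c + lam - gam = 0 ∧
  x + y = (fun _ => 1) ∧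
  x - z = (fun _ => -1) ∧
  (∀ i, 0 < y i) ∧ (∀ i, 0 < z i) ∧ (∀ i, 0 < lam i) ∧ (∀ i, 0 < gam i)

/-- The central-path neighborhood `N₂(θ)`. -/
def N2 {n : ℕ} (H : Matrix (Fin n) (Fin n) ℝ) (c : Fin n → ℝ) (θ : ℝ)
    (x y z lam gam : Fin n → ℝ) : Prop :=
  StrictlyFeasible H c x y z lam gam ∧
  enorm2 (Sum.elim y z * Sum.elim lam gam
      - fun _ => dotp (Sum.elim y z) (Sum.elim lam gam) / (2 * (n : ℝ)))
    ≤ θ * (dotp (Sum.elim y z) (Sum.elim lam gam) / (2 * (n : ℝ)))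

/-- First-derivative direction of the arc at a point `(x,y,z,λ,γ)`. -/
def FirstDir {n : ℕ} (H : Matrix (Fin n) (Fin n) ℝ)
    (y z lam gam xd yd zd ld gd : Fin n → ℝ) : Prop :=
  H.mulVec xd + ld - gd = 0 ∧ yd = -xd ∧ zd = xd ∧
  lam * yd + y * ld = lam * y ∧ gam * zd + z * gd = gam * z

/-- Second-derivative direction of the arc at a point `(x,y,z,λ,γ)`. -/
def SecondDir {n : ℕ} (H : Matrix (Fin n) (Fin n) ℝ)
    (y z lam gam yd zd ld gd xdd ydd zdd ldd gdd : Fin n → ℝ) : Prop :=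
  H.mulVec xdd + ldd - gdd = 0 ∧ ydd = -xdd ∧ zdd = xdd ∧
  lam * ydd + y * ldd = (-2 : ℝ) • (ld * yd) ∧
  gam * zdd + z * gdd = (-2 : ℝ) • (gd * zd)

/-- The ellipse (arc) approximation point: `v(α) = v - v̇·sin α + v̈·(1 - cos α)`. -/
def arc {n : ℕ} (v vd vdd : Fin n → ℝ) (α : ℝ) : Fin n → ℝ :=
  v - Real.sin α • vd + (1 - Real.cos α) • vdd

/-- Corrector (centering) direction at a point `(x,y,z,λ,γ)` with target `μ`. -/
def CorrDir {n : ℕ} (H : Matrix (Fin n) (Fin n) ℝ)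
    (y z lam gam dx dy dz dl dg : Fin n → ℝ) (mu : ℝ) : Prop :=
  H.mulVec dx + dl - dg = 0 ∧ dy = -dx ∧ dz = dx ∧
  lam * dy + y * dl = (fun _ => mu) - lam * y ∧
  gam * dz + z * dg = (fun _ => mu) - gam * z

/-!
Scale by `D = diag(√(ω/p))`. The first-order complementarity equation `ω∘ṗ + p∘ω̇ = p∘ω` gives
`‖Dṗ‖² + 2ṗᵀω̇ + ‖D⁻¹ω̇‖² = pᵀω = 2nμ`, and `ṗᵀω̇ = ẋᵀHẋ ≥ 0`; hence both scaled norms are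
at most `2nμ`, `ṗᵀω̇ ≤ nμ` and `‖ṗ∘ω̇‖ ≤ nμ`. The second-order equation divided by `√(p∘ω)`,
together with `pᵢωᵢ ≥ (1-θ)μ` on `N₂(θ)`, gives `(1-θ)(‖Dp̈‖² + ‖D⁻¹ω̈‖²) ≤ 4n²μ`.
Since `‖u∘v‖ ≤ ‖Du‖‖D⁻¹v‖` and centering a vector does not increase its norm, `a₃ = O(n^{3/2}μ)`
and `a₄ = O(n²μ)`, so at `s = θ/√n` all terms of `q` except `a₀ = -θμ` are small multiples of
`θμ` once `θ ≤ 0.22`. As `q` is strictly increasing on `[0, ∞)`, no root lies below `θ/√n`.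
-/

open Finset
open scoped Matrix

section Sums

variable {ι : Type*} [Fintype ι]

lemma sum_mul_le_sum_mul_sum {f g : ι → ℝ} (hf : ∀ i, 0 ≤ f i) (hg : ∀ i, 0 ≤ g i) :
    ∑ i, f i * g i ≤ (∑ i, f i) * ∑ i, g i := by
  rw [sum_mul_sum]
  exact sum_le_sum fun i _ =>
    single_le_sum (f := fun j => f i * g j) (fun j _ => mul_nonneg (hf i) (hg j)) (mem_univ i)

lemma sum_sub_mean_sq_le (u : ι → ℝ) :
    ∑ i, (u i - (∑ j, u j) / Fintype.card ι) ^ 2 ≤ ∑ i, u i ^ 2 := by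
  set N : ℝ := (Fintype.card ι : ℝ)
  set S := ∑ j, u j
  have hexpand : ∑ i, (u i - S / N) ^ 2 = ∑ i, u i ^ 2 - S / N * (2 * S - N * (S / N)) := by
    simp only [sub_sq, sum_add_distrib, sum_sub_distrib, ← sum_mul, ← mul_sum, sum_const,
      card_univ, nsmul_eq_mul, S, N]
    ring
  have hmean : 0 ≤ S / N * (2 * S - N * (S / N)) := by
    rcases eq_or_ne N 0 with hN | hN
    · simp [hN]
    · rw [mul_div_cancel₀ S hN, two_mul, add_sub_cancel_right, div_mul_eq_mul_div, ← sq]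
      positivity
  linarith

lemma sum_sq_add_le (a b : ι → ℝ) :
    ∑ i, (a i + b i) ^ 2 ≤ 2 * ∑ i, a i ^ 2 + 2 * ∑ i, b i ^ 2 := by
  rw [mul_sum, mul_sum, ← sum_add_distrib]
  exact sum_le_sum fun i _ => by nlinarith [sq_nonneg (a i - b i)]

end Sums

section EuclideanNorm

variable {ι : Type*} [Fintype ι]

lemma enorm2_sq (u : ι → ℝ) : enorm2 u ^ 2 = ∑ i, u i ^ 2 :=
  Real.sq_sqrt (sum_nonneg fun i _ => sq_nonneg (u i))

lemma enorm2_nonneg (u : ι → ℝ) : 0 ≤ enorm2 u := Real.sqrt_nonneg _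

lemma abs_le_enorm2 (u : ι → ℝ) (i : ι) : |u i| ≤ enorm2 u :=
  Real.abs_le_sqrt (single_le_sum (f := fun j => u j ^ 2) (fun j _ => sq_nonneg (u j)) (mem_univ i))

lemma sub_le_of_enorm2_sub_const_le {u : ι → ℝ} {c r : ℝ} (h : enorm2 (u - fun _ => c) ≤ r)
    (i : ι) : c - r ≤ u i := by
  have := (abs_le.mp ((abs_le_enorm2 _ i).trans h)).1
  simp only [Pi.sub_apply] at this
  linarith

lemma enorm2_sub_mean_sq_le {u : ι → ℝ} {S N : ℝ} (hS : ∑ j, u j = S)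
    (hN : (Fintype.card ι : ℝ) = N) :
    enorm2 (u - fun _ => S / N) ^ 2 ≤ ∑ i, u i ^ 2 := by
  rw [enorm2_sq, ← hS, ← hN]
  exact sum_sub_mean_sq_le u

end EuclideanNorm

/-- `‖D f‖²` for the diagonal scaling `D = diag(√r)`. -/
def weightedSqNorm {ι : Type*} [Fintype ι] (r f : ι → ℝ) : ℝ := ∑ i, f i ^ 2 * r i

section ScaledDirections

variable {ι : Type*} [Fintype ι] {p w pd wd pdd wdd : ι → ℝ}

lemma weightedSqNorm_div_nonneg {a b : ι → ℝ} (ha : ∀ i, 0 < a i) (hb : ∀ i, 0 < b i)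
    (f : ι → ℝ) : 0 ≤ weightedSqNorm (a / b) f :=
  sum_nonneg fun i _ => mul_nonneg (sq_nonneg _) (div_nonneg (ha i).le (hb i).le)

lemma sum_sq_mul_le_weightedSqNorm_mul (hp : ∀ i, 0 < p i) (hw : ∀ i, 0 < w i) (a b : ι → ℝ) :
    ∑ i, (a i * b i) ^ 2 ≤ weightedSqNorm (w / p) a * weightedSqNorm (p / w) b := by
  have hsplit : ∀ i, (a i * b i) ^ 2 = a i ^ 2 * (w / p) i * (b i ^ 2 * (p / w) i) := by
    intro i
    have := (hp i).ne'
    have := (hw i).ne'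
    simp only [Pi.div_apply]
    field_simp
  simp only [hsplit]
  exact sum_mul_le_sum_mul_sum
    (fun i => mul_nonneg (sq_nonneg _) (div_nonneg (hw i).le (hp i).le))
    (fun i => mul_nonneg (sq_nonneg _) (div_nonneg (hp i).le (hw i).le))

lemma weightedSqNorm_add_two_dotp_add (hp : ∀ i, 0 < p i) (hw : ∀ i, 0 < w i) (a b : ι → ℝ) :
    weightedSqNorm (w / p) a + 2 * dotp a b + weightedSqNorm (p / w) b
      = ∑ i, (w i * a i + p i * b i) ^ 2 / (p i * w i) := by
  simp only [weightedSqNorm, dotp, mul_sum, ← sum_add_distrib]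
  refine sum_congr rfl fun i _ => ?_
  have := (hp i).ne'
  have := (hw i).ne'
  simp only [Pi.div_apply]
  field_simp
  ring

lemma weightedSqNorm_add_two_dotp_add_eq_of_firstDir (hp : ∀ i, 0 < p i) (hw : ∀ i, 0 < w i)
    (h1 : w * pd + p * wd = w * p) :
    weightedSqNorm (w / p) pd + 2 * dotp pd wd + weightedSqNorm (p / w) wd = dotp p w := by
  rw [weightedSqNorm_add_two_dotp_add hp hw]
  refine sum_congr rfl fun i _ => ?_
  have h1i : w i * pd i + p i * wd i = w i * p i := congrFun h1 i
  have := (hp i).ne'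
  have := (hw i).ne'
  rw [h1i]
  field_simp

lemma two_dotp_le_of_firstDir (hp : ∀ i, 0 < p i) (hw : ∀ i, 0 < w i)
    (h1 : w * pd + p * wd = w * p) :
    2 * dotp pd wd ≤ dotp p w := by
  have := weightedSqNorm_div_nonneg hw hp pd
  have := weightedSqNorm_div_nonneg hp hw wd
  linarith [weightedSqNorm_add_two_dotp_add_eq_of_firstDir hp hw h1]

lemma weightedSqNorm_add_le_of_firstDir (hp : ∀ i, 0 < p i) (hw : ∀ i, 0 < w i)
    (h1 : w * pd + p * wd = w * p) (hdw : 0 ≤ dotp pd wd) :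
    weightedSqNorm (w / p) pd + weightedSqNorm (p / w) wd ≤ dotp p w := by
  linarith [weightedSqNorm_add_two_dotp_add_eq_of_firstDir hp hw h1]

lemma four_mul_sum_sq_mul_le_of_firstDir (hp : ∀ i, 0 < p i) (hw : ∀ i, 0 < w i)
    (h1 : w * pd + p * wd = w * p) (hdw : 0 ≤ dotp pd wd) :
    4 * ∑ i, (pd i * wd i) ^ 2 ≤ dotp p w ^ 2 := by
  have hA := weightedSqNorm_div_nonneg hw hp pd
  have hB := weightedSqNorm_div_nonneg hp hw wd
  have hAB := weightedSqNorm_add_le_of_firstDir hp hw h1 hdw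
  nlinarith [sum_sq_mul_le_weightedSqNorm_mul hp hw pd wd, mul_self_le_mul_self (by positivity) hAB,
    sq_nonneg (weightedSqNorm (w / p) pd - weightedSqNorm (p / w) wd)]

lemma weightedSqNorm_add_two_dotp_add_le_of_secondDir (hp : ∀ i, 0 < p i) (hw : ∀ i, 0 < w i)
    (h2 : w * pdd + p * wdd = (-2 : ℝ) • (wd * pd)) {m : ℝ} (hpw : ∀ i, m ≤ p i * w i) :
    m * (weightedSqNorm (w / p) pdd + 2 * dotp pdd wdd + weightedSqNorm (p / w) wdd)
      ≤ 4 * ∑ i, (pd i * wd i) ^ 2 := by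
  rw [weightedSqNorm_add_two_dotp_add hp hw, mul_sum, mul_sum]
  refine sum_le_sum fun i _ => ?_
  have h2i : w i * pdd i + p i * wdd i = -2 * (wd i * pd i) := congrFun h2 i
  have hpwi : 0 < p i * w i := mul_pos (hp i) (hw i)
  rw [h2i, mul_div_assoc', div_le_iff₀ hpwi]
  nlinarith [mul_le_mul_of_nonneg_left (hpw i) (sq_nonneg (pd i * wd i))]

lemma mul_weightedSqNorm_add_le_of_secondDir (hp : ∀ i, 0 < p i) (hw : ∀ i, 0 < w i)
    (h1 : w * pd + p * wd = w * p) (h2 : w * pdd + p * wdd = (-2 : ℝ) • (wd * pd))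
    (hdw : 0 ≤ dotp pd wd) (hddw : 0 ≤ dotp pdd wdd) {m : ℝ} (hm : 0 ≤ m)
    (hpw : ∀ i, m ≤ p i * w i) :
    m * (weightedSqNorm (w / p) pdd + weightedSqNorm (p / w) wdd) ≤ dotp p w ^ 2 := by
  have := weightedSqNorm_add_two_dotp_add_le_of_secondDir hp hw h2 hpw
  nlinarith [four_mul_sum_sq_mul_le_of_firstDir hp hw h1 hdw, mul_nonneg hm hddw]

lemma mul_sum_sq_cross_le (hp : ∀ i, 0 < p i) (hw : ∀ i, 0 < w i)
    (h1 : w * pd + p * wd = w * p) (h2 : w * pdd + p * wdd = (-2 : ℝ) • (wd * pd))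
    (hdw : 0 ≤ dotp pd wd) (hddw : 0 ≤ dotp pdd wdd) {m : ℝ} (hm : 0 ≤ m)
    (hpw : ∀ i, m ≤ p i * w i) :
    m * ∑ i, (pd i * wdd i + wd i * pdd i) ^ 2 ≤ 2 * dotp p w ^ 3 := by
  set A := weightedSqNorm (w / p) pd
  set B := weightedSqNorm (p / w) wd
  set C := weightedSqNorm (w / p) pdd
  set D := weightedSqNorm (p / w) wdd
  have hA : 0 ≤ A := weightedSqNorm_div_nonneg hw hp pd
  have hB : 0 ≤ B := weightedSqNorm_div_nonneg hp hw wd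
  have hC : 0 ≤ C := weightedSqNorm_div_nonneg hw hp pdd
  have hD : 0 ≤ D := weightedSqNorm_div_nonneg hp hw wdd
  have hAB : A + B ≤ dotp p w := weightedSqNorm_add_le_of_firstDir hp hw h1 hdw
  have hCD : m * (C + D) ≤ dotp p w ^ 2 :=
    mul_weightedSqNorm_add_le_of_secondDir hp hw h1 h2 hdw hddw hm hpw
  have hcross : ∑ i, (pd i * wdd i + wd i * pdd i) ^ 2 ≤ 2 * (A * D) + 2 * (C * B) := by
    have hAD := sum_sq_mul_le_weightedSqNorm_mul hp hw pd wdd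
    have hCB := sum_sq_mul_le_weightedSqNorm_mul hp hw pdd wd
    simp only [mul_comm (pdd _) (wd _)] at hCB
    have hsq : ∑ i, (pd i * wdd i + wd i * pdd i) ^ 2
        ≤ 2 * ∑ i, (pd i * wdd i) ^ 2 + 2 * ∑ i, (wd i * pdd i) ^ 2 := sum_sq_add_le _ _
    linarith
  calc m * ∑ i, (pd i * wdd i + wd i * pdd i) ^ 2
      ≤ 2 * ((A + B) * (m * (C + D))) := by
        nlinarith [mul_le_mul_of_nonneg_left hcross hm, mul_nonneg hm (mul_nonneg hA hC),
          mul_nonneg hm (mul_nonneg hB hD)]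
    _ ≤ 2 * (dotp p w * dotp p w ^ 2) := by
        gcongr
        exact (add_nonneg hA hB).trans hAB
    _ = 2 * dotp p w ^ 3 := by ring

lemma two_mul_sq_mul_sum_sq_diff_le (hp : ∀ i, 0 < p i) (hw : ∀ i, 0 < w i)
    (h1 : w * pd + p * wd = w * p) (h2 : w * pdd + p * wdd = (-2 : ℝ) • (wd * pd))
    (hdw : 0 ≤ dotp pd wd) (hddw : 0 ≤ dotp pdd wdd) {m : ℝ} (hm : 0 ≤ m)
    (hpw : ∀ i, m ≤ p i * w i) :
    2 * m ^ 2 * ∑ i, (pdd i * wdd i - wd i * pd i) ^ 2 ≤ dotp p w ^ 4 + m ^ 2 * dotp p w ^ 2 := by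
  simp only [mul_comm (wd _) (pd _)]
  set C := weightedSqNorm (w / p) pdd
  set D := weightedSqNorm (p / w) wdd
  have hC : 0 ≤ C := weightedSqNorm_div_nonneg hw hp pdd
  have hD : 0 ≤ D := weightedSqNorm_div_nonneg hp hw wdd
  have hCD : m * (C + D) ≤ dotp p w ^ 2 :=
    mul_weightedSqNorm_add_le_of_secondDir hp hw h1 h2 hdw hddw hm hpw
  have hfirst := four_mul_sum_sq_mul_le_of_firstDir hp hw h1 hdw
  have hdiff : ∑ i, (pdd i * wdd i - pd i * wd i) ^ 2
      ≤ 2 * (C * D) + 2 * ∑ i, (pd i * wd i) ^ 2 := by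
    have hCD' := sum_sq_mul_le_weightedSqNorm_mul hp hw pdd wdd
    have hsq : ∑ i, (pdd i * wdd i + -(pd i * wd i)) ^ 2
        ≤ 2 * ∑ i, (pdd i * wdd i) ^ 2 + 2 * ∑ i, (-(pd i * wd i)) ^ 2 := sum_sq_add_le _ _
    simp only [← sub_eq_add_neg, neg_sq] at hsq
    linarith
  nlinarith [mul_le_mul_of_nonneg_left hdiff (sq_nonneg m),
    mul_self_le_mul_self (by positivity) hCD, sq_nonneg (m * C - m * D),
    mul_le_mul_of_nonneg_left hfirst (sq_nonneg m)]

end ScaledDirections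

section Quartic

lemma quartic_strictMonoOn {q : ℝ → ℝ} {a0 a1 a2 a3 a4 : ℝ}
    (hq : ∀ s, q s = a4 * s ^ 4 + a3 * s ^ 3 + a2 * s ^ 2 + a1 * s + a0) (ha1 : 0 < a1)
    (ha2 : 0 ≤ a2) (ha3 : 0 ≤ a3) (ha4 : 0 ≤ a4) :
    StrictMonoOn q (Set.Ici 0) := by
  intro s (hs : 0 ≤ s) t _ hst
  have h2 := pow_le_pow_left₀ hs hst.le 2
  have h3 := pow_le_pow_left₀ hs hst.le 3
  have h4 := pow_le_pow_left₀ hs hst.le 4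
  rw [hq, hq]
  nlinarith [mul_le_mul_of_nonneg_left h2 ha2, mul_le_mul_of_nonneg_left h3 ha3,
    mul_le_mul_of_nonneg_left h4 ha4]

lemma quartic_nonpos_of_bounds {θ μ N d a3 t s : ℝ} (hθ0 : 0 < θ) (hθ : θ ≤ 0.22) (hμ : 0 < μ)
    (hN : 1 ≤ N) (hs0 : 0 ≤ s) (hs : N * s ^ 2 = θ ^ 2) (hd : 2 * d ≤ 2 * N * μ)
    (ha3sq : (1 - θ) * μ * a3 ^ 2 ≤ 2 * (2 * N * μ) ^ 3)
    (htsq : 2 * ((1 - θ) * μ) ^ 2 * t ^ 2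
      ≤ (2 * N * μ) ^ 4 + ((1 - θ) * μ) ^ 2 * (2 * N * μ) ^ 2) :
    (t + θ * d / N) * s ^ 4 + a3 * s ^ 3 + θ * d / N * s ^ 2 + θ * μ * s + -θ * μ ≤ 0 := by
  have hN0 : 0 < N := by linarith
  have hs2 : s ^ 2 ≤ θ ^ 2 := by nlinarith
  have hsθ : s ≤ θ := le_of_sq_le_sq hs2 hθ0.le
  have hdN : d / N ≤ μ := by rw [div_le_iff₀ hN0]; linarith
  have hlin : θ * μ * s ≤ θ ^ 2 * μ := by nlinarith [mul_pos hθ0 hμ]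
  have hquad : θ * d / N * s ^ 2 ≤ θ ^ 3 * μ := by
    rw [mul_div_assoc]
    nlinarith [mul_le_mul hdN hs2 (sq_nonneg s) hμ.le]
  have hquartDot : θ * d / N * s ^ 4 ≤ θ ^ 5 * μ := by
    rw [mul_div_assoc]
    nlinarith [mul_le_mul hdN (pow_le_pow_left₀ hs0 hsθ 4) (pow_nonneg hs0 4) hμ.le]
  have hcubic : a3 * s ^ 3 ≤ 0.23 * (θ * μ) := by
    have hX : (1 - θ) * (a3 * s ^ 3) ^ 2 ≤ 16 * θ ^ 6 * μ ^ 2 := by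
      refine le_of_mul_le_mul_left ?_ hμ
      calc μ * ((1 - θ) * (a3 * s ^ 3) ^ 2) = (1 - θ) * μ * a3 ^ 2 * s ^ 6 := by ring
        _ ≤ 2 * (2 * N * μ) ^ 3 * s ^ 6 := by gcongr
        _ = μ * (16 * (N * s ^ 2) ^ 3 * μ ^ 2) := by ring
        _ = μ * (16 * θ ^ 6 * μ ^ 2) := by rw [hs]; ring
    have hθ4 : 16 * θ ^ 4 ≤ 0.0529 * (1 - θ) := by
      nlinarith [pow_le_pow_left₀ hθ0.le hθ 4]
    refine le_of_sq_le_sq (le_of_mul_le_mul_left ?_ (by linarith : 0 < 1 - θ)) (by positivity)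
    linarith [mul_le_mul_of_nonneg_right hθ4 (sq_nonneg (θ * μ))]
  have hquartNorm : t * s ^ 4 ≤ 0.05 * (θ * μ) := by
    have hY : (1 - θ) ^ 2 * (t * s ^ 4) ^ 2 ≤ 10 * θ ^ 8 * μ ^ 2 := by
      have hθ1 : (1 - θ) ^ 2 ≤ 1 := by nlinarith
      have hs4 : s ^ 4 ≤ θ ^ 4 := pow_le_pow_left₀ hs0 hsθ 4
      refine le_of_mul_le_mul_left ?_ (by positivity : 0 < 2 * μ ^ 2)
      calc 2 * μ ^ 2 * ((1 - θ) ^ 2 * (t * s ^ 4) ^ 2) = 2 * ((1 - θ) * μ) ^ 2 * t ^ 2 * s ^ 8 := by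
            ring
        _ ≤ ((2 * N * μ) ^ 4 + ((1 - θ) * μ) ^ 2 * (2 * N * μ) ^ 2) * s ^ 8 := by gcongr
        _ = 16 * μ ^ 4 * (N * s ^ 2) ^ 4 + 4 * μ ^ 4 * (N * s ^ 2) ^ 2 * ((1 - θ) ^ 2 * s ^ 4) := by
            ring
        _ ≤ 16 * μ ^ 4 * (θ ^ 2) ^ 4 + 4 * μ ^ 4 * (θ ^ 2) ^ 2 * (1 * θ ^ 4) := by
            rw [hs]
            gcongr
        _ = 2 * μ ^ 2 * (10 * θ ^ 8 * μ ^ 2) := by ring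
    have hθ6 : 10 * θ ^ 6 ≤ 0.0025 * (1 - θ) ^ 2 := by
      nlinarith [pow_le_pow_left₀ hθ0.le hθ 6]
    refine le_of_sq_le_sq (le_of_mul_le_mul_left ?_ (by nlinarith : 0 < (1 - θ) ^ 2))
      (by positivity)
    linarith [mul_le_mul_of_nonneg_right hθ6 (sq_nonneg (θ * μ))]
  -- the left side is at most `(0.05 + θ⁴ + 0.23 + θ² + θ - 1) θμ < 0`
  nlinarith [mul_le_mul_of_nonneg_right (pow_le_pow_left₀ hθ0.le hθ 4) (mul_pos hθ0 hμ).le,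
    mul_le_mul_of_nonneg_right (pow_le_pow_left₀ hθ0.le hθ 2) (mul_pos hθ0 hμ).le,
    mul_le_mul_of_nonneg_right hθ (mul_pos hθ0 hμ).le]

end Quartic

lemma elim_mul_add_elim_mul_of_eq {α β : Type*} {y lam yd ld r : α → ℝ}
    {z gam zd gd r' : β → ℝ} (h : lam * yd + y * ld = r) (h' : gam * zd + z * gd = r') :
    Sum.elim lam gam * Sum.elim yd zd + Sum.elim y z * Sum.elim ld gd = Sum.elim r r' := by
  rw [← Sum.elim_mul_mul, ← Sum.elim_mul_mul, ← Sum.elim_add_add, h, h']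

lemma dotp_elim_neg_nonneg {m : Type*} [Fintype m] {H : Matrix m m ℝ} (hH : H.PosSemidef)
    {v l g : m → ℝ} (h : H *ᵥ v + l - g = 0) : 0 ≤ dotp (Sum.elim (-v) v) (Sum.elim l g) := by
  have hHv : g - l = H *ᵥ v := by linear_combination -h
  have : dotp (Sum.elim (-v) v) (Sum.elim l g) = star v ⬝ᵥ (H *ᵥ v) := by
    rw [← hHv]
    simp only [dotp, dotProduct, Fintype.sum_sum_type, Sum.elim_inl, Sum.elim_inr, star_trivial,
      Pi.neg_apply, Pi.sub_apply, neg_mul, sum_neg_distrib, mul_sub, sum_sub_distrib]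
    ring
  exact this ▸ hH.dotProduct_mulVec_nonneg v

section BoxQP

variable {n : ℕ} {H : Matrix (Fin n) (Fin n) ℝ} {c x y z lam gam : Fin n → ℝ}

lemma StrictlyFeasible.elim_pos (h : StrictlyFeasible H c x y z lam gam) :
    (∀ i, 0 < Sum.elim y z i) ∧ ∀ i, 0 < Sum.elim lam gam i := by
  obtain ⟨-, -, -, hy, hz, hl, hg⟩ := h
  exact ⟨fun | .inl i => hy i | .inr i => hz i, fun | .inl i => hl i | .inr i => hg i⟩

lemma N2.le_mul {θ : ℝ} (h : N2 H c θ x y z lam gam) (i : Fin n ⊕ Fin n) :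
    (1 - θ) * (dotp (Sum.elim y z) (Sum.elim lam gam) / (2 * (n : ℝ)))
      ≤ (Sum.elim y z * Sum.elim lam gam) i := by
  linarith [sub_le_of_enorm2_sub_const_le h.2 i]

variable {xd yd zd ld gd : Fin n → ℝ}

lemma FirstDir.elim_mul_add_elim_mul (h : FirstDir H y z lam gam xd yd zd ld gd) :
    Sum.elim lam gam * Sum.elim yd zd + Sum.elim y z * Sum.elim ld gd
      = Sum.elim lam gam * Sum.elim y z := by
  rw [elim_mul_add_elim_mul_of_eq h.2.2.2.1 h.2.2.2.2, Sum.elim_mul_mul]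

lemma FirstDir.dotp_nonneg (hH : H.PosSemidef) (h : FirstDir H y z lam gam xd yd zd ld gd) :
    0 ≤ dotp (Sum.elim yd zd) (Sum.elim ld gd) := by
  obtain ⟨h1, rfl, rfl, -, -⟩ := h
  exact dotp_elim_neg_nonneg hH h1

variable {xdd ydd zdd ldd gdd : Fin n → ℝ}

lemma SecondDir.elim_mul_add_elim_mul
    (h : SecondDir H y z lam gam yd zd ld gd xdd ydd zdd ldd gdd) :
    Sum.elim lam gam * Sum.elim ydd zdd + Sum.elim y z * Sum.elim ldd gdd
      = (-2 : ℝ) • (Sum.elim ld gd * Sum.elim yd zd) := by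
  rw [elim_mul_add_elim_mul_of_eq h.2.2.2.1 h.2.2.2.2]
  ext (i | i) <;> rfl

lemma SecondDir.dotp_nonneg (hH : H.PosSemidef)
    (h : SecondDir H y z lam gam yd zd ld gd xdd ydd zdd ldd gdd) :
    0 ≤ dotp (Sum.elim ydd zdd) (Sum.elim ldd gdd) := by
  obtain ⟨h1, rfl, rfl, -, -⟩ := h
  exact dotp_elim_neg_nonneg hH h1

end BoxQP

/-- for `θ ∈ (0,0.22]`, `q(θ/√n) ≤ 0`; consequently any root of the
quartic `q` in `(0,1]` is at least `θ/√n`. -/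
theorem stmt_12 {n : ℕ} (hn : 0 < n) (H : Matrix (Fin n) (Fin n) ℝ) (hH : H.PosDef)
    (c x y z lam gam : Fin n → ℝ)
    (θ : ℝ) (hθ : θ ∈ Set.Ioc (0 : ℝ) 0.22)
    (hN : N2 H c θ x y z lam gam)
    (xd yd zd ld gd : Fin n → ℝ)
    (hfd : FirstDir H y z lam gam xd yd zd ld gd)
    (xdd ydd zdd ldd gdd : Fin n → ℝ)
    (hsd : SecondDir H y z lam gam yd zd ld gd xdd ydd zdd ldd gdd)
    (p w pd wd pdd wdd : Fin n ⊕ Fin n → ℝ)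
    (hp : p = Sum.elim y z) (hw : w = Sum.elim lam gam)
    (hpd : pd = Sum.elim yd zd) (hwd : wd = Sum.elim ld gd)
    (hpdd : pdd = Sum.elim ydd zdd) (hwdd : wdd = Sum.elim ldd gdd)
    (μ : ℝ) (hμ : μ = dotp p w / (2 * (n : ℝ))) (hμpos : 0 < μ)
    (a0 a1 a2 a3 a4 : ℝ)
    (ha0 : a0 = -θ * μ) (ha1 : a1 = θ * μ)
    (ha2 : a2 = θ * dotp pd wd / (n : ℝ))
    (ha3 : a3 = enorm2 (pd * wdd + wd * pdd
        - fun _ => (dotp pd wdd + dotp wd pdd) / (2 * (n : ℝ))))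
    (ha4 : a4 = enorm2 (pdd * wdd - wd * pd
        - fun _ => (dotp pdd wdd - dotp wd pd) / (2 * (n : ℝ)))
        + θ * dotp pd wd / (n : ℝ))
    (q : ℝ → ℝ)
    (hq : ∀ s : ℝ, q s = a4 * s ^ 4 + a3 * s ^ 3 + a2 * s ^ 2 + a1 * s + a0) :
    q (θ / Real.sqrt (n : ℝ)) ≤ 0 ∧
    ∀ s ∈ Set.Ioc (0 : ℝ) 1, q s = 0 → θ / Real.sqrt (n : ℝ) ≤ s := by
  obtain ⟨hθ0, hθ⟩ := hθ
  obtain ⟨hp0, hw0⟩ := hN.1.elim_pos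
  have h1 := hfd.elim_mul_add_elim_mul
  have h2 := hsd.elim_mul_add_elim_mul
  have hdw := hfd.dotp_nonneg hH.posSemidef
  have hddw := hsd.dotp_nonneg hH.posSemidef
  have hpw := hN.le_mul
  simp only [← hp, ← hw, ← hpd, ← hwd, ← hpdd, ← hwdd, ← hμ] at hp0 hw0 h1 h2 hdw hddw hpw
  have hm : 0 ≤ (1 - θ) * μ := mul_nonneg (by linarith) hμpos.le
  have hn1 : (1 : ℝ) ≤ n := by exact_mod_cast hn
  have hP : dotp p w = 2 * n * μ := by rw [hμ]; field_simp
  have hcard : (Fintype.card (Fin n ⊕ Fin n) : ℝ) = 2 * n := by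
    push_cast [Fintype.card_sum, Fintype.card_fin]
    ring
  have hcross := mul_sum_sq_cross_le hp0 hw0 h1 h2 hdw hddw hm hpw
  have hdiff := two_mul_sq_mul_sum_sq_diff_le hp0 hw0 h1 h2 hdw hddw hm hpw
  have hd := two_dotp_le_of_firstDir hp0 hw0 h1
  rw [hP] at hcross hdiff hd
  have hq0 : q (θ / √n) ≤ 0 := by
    rw [hq, ha4, ha3, ha2, ha1, ha0]
    refine quartic_nonpos_of_bounds hθ0 hθ hμpos hn1 (by positivity)
      (by rw [div_pow, Real.sq_sqrt (by positivity)]; field_simp) hd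
      ((mul_le_mul_of_nonneg_left (enorm2_sub_mean_sq_le ?_ hcard) hm).trans hcross)
      ((mul_le_mul_of_nonneg_left (enorm2_sub_mean_sq_le ?_ hcard) (by positivity)).trans hdiff)
    · simp only [dotp, Pi.add_apply, Pi.mul_apply, sum_add_distrib]
    · simp only [dotp, Pi.sub_apply, Pi.mul_apply, sum_sub_distrib]
  have ha2' : 0 ≤ a2 := ha2 ▸ div_nonneg (mul_nonneg hθ0.le hdw) n.cast_nonneg
  have hmono := quartic_strictMonoOn hq (ha1 ▸ mul_pos hθ0 hμpos) ha2' (ha3 ▸ enorm2_nonneg _)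
    (ha4 ▸ add_nonneg (enorm2_nonneg _) (ha2 ▸ ha2'))
  exact ⟨hq0, fun s hs hqs =>
    (hmono.le_iff_le (Set.mem_Ici.2 (by positivity)) (Set.mem_Ici.2 hs.1.le)).mp (hqs ▸ hq0)⟩

end
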